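/- arXiv:1907.01754 — 7 statements merged into one kernel-verified Lean document; each statement's English description precedes it below -/
import Mathlib

section
/- If f : Ω → ℝ is a C^2 function on a domain Ω ⊆ ℝ^n whose graph is light-like everywhere (i.e. B_f ≡ 0 on Ω), then A_f ≡ 0 on Ω; that is, every light-like graph is a zero mean curvature graph. -/
open scoped BigOperators
open RealInnerProductSpace

noncomputable def pd {n : ℕ} (f : EuclideanSpace ℝ (Fin n) → ℝ) (i : Fin n)
    (x : EuclideanSpace ℝ (Fin n)) : ℝ :=
  fderiv ℝ f x (EuclideanSpace.single i 1)

noncomputable def Bf {n : ℕ} (f : EuclideanSpace ℝ (Fin n) → ℝ)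
    (x : EuclideanSpace ℝ (Fin n)) : ℝ :=
  1 - ∑ i, (pd f i x) ^ 2

noncomputable def Af {n : ℕ} (f : EuclideanSpace ℝ (Fin n) → ℝ)
    (x : EuclideanSpace ℝ (Fin n)) : ℝ :=
  ∑ i, ∑ j, (Bf f x * (if i = j then (1 : ℝ) else 0) + pd f i x * pd f j x)
      * pd (pd f j) i x

/-!
On a light-like graph `∑ⱼ (∂ⱼf)² ≡ 1`, so differentiating in the direction `eᵢ` gives
`∑ⱼ ∂ⱼf · ∂ᵢ∂ⱼf = 0` for every `i`. Since `B_f = 0`, the mean curvature operator reduces to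
`A_f = ∑ᵢ ∂ᵢf · ∑ⱼ ∂ⱼf · ∂ᵢ∂ⱼf`, which therefore vanishes.
-/

open Filter Topology

theorem sum_mul_fderiv_eq_zero_of_sum_sq_eventuallyEq_const {E ι : Type*}
    [NormedAddCommGroup E] [NormedSpace ℝ E] [Fintype ι] {g : ι → E → ℝ} {x : E} {c : ℝ}
    (hg : ∀ j, DifferentiableAt ℝ (g j) x) (hc : (fun y => ∑ j, g j y ^ 2) =ᶠ[𝓝 x] fun _ => c)
    (v : E) : ∑ j, g j x * fderiv ℝ (g j) x v = 0 := by
  have hsum : HasFDerivAt (fun y => ∑ j, g j y ^ 2) (∑ j, (2 * g j x) • fderiv ℝ (g j) x) x :=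
    HasFDerivAt.fun_sum fun j _ =>
      ((hg j).hasFDerivAt.pow 2).congr_fderiv (by rw [pow_one, nsmul_eq_mul, Nat.cast_ofNat])
  have hv := congrArg (fun L : E →L[ℝ] ℝ => L v)
    (hsum.unique ((hasFDerivAt_const c x).congr_of_eventuallyEq hc))
  simp only [sum_apply, smul_apply, smul_eq_mul, zero_apply, mul_assoc,
    ← Finset.mul_sum] at hv
  exact (mul_eq_zero.mp hv).resolve_left two_ne_zero

theorem differentiableAt_pd {n : ℕ} {f : EuclideanSpace ℝ (Fin n) → ℝ}
    {x : EuclideanSpace ℝ (Fin n)} (hf : ContDiffAt ℝ 2 f x) (j : Fin n) :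
    DifferentiableAt ℝ (pd f j) x :=
  ((hf.fderiv_right (m := 1) (by norm_num)).differentiableAt one_ne_zero).clm_apply
    (differentiableAt_const _)

theorem Af_eq_of_Bf_eq_zero {n : ℕ} {f : EuclideanSpace ℝ (Fin n) → ℝ}
    {x : EuclideanSpace ℝ (Fin n)} (hB : Bf f x = 0) :
    Af f x = ∑ i, pd f i x * ∑ j, pd f j x * pd (pd f j) i x := by
  simp only [Af, hB, zero_mul, zero_add, Finset.mul_sum, mul_assoc]

theorem stmt1 {n : ℕ} (Ω : Set (EuclideanSpace ℝ (Fin n))) (hΩ : IsOpen Ω)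
    (f : EuclideanSpace ℝ (Fin n) → ℝ) (hf : ContDiffOn ℝ 2 f Ω)
    (hlight : ∀ x ∈ Ω, Bf f x = 0) :
    ∀ x ∈ Ω, Af f x = 0 := by
  intro x hx
  have hsq : (fun y => ∑ j, pd f j y ^ 2) =ᶠ[𝓝 x] fun _ => (1 : ℝ) := by
    filter_upwards [hΩ.mem_nhds hx] with y hy
    exact (sub_eq_zero.mp (hlight y hy)).symm
  have hpd := differentiableAt_pd (hf.contDiffAt (hΩ.mem_nhds hx))
  rw [Af_eq_of_Bf_eq_zero (hlight x hx)]
  refine Finset.sum_eq_zero fun i _ => ?_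
  rw [show ∑ j, pd f j x * pd (pd f j) i x = 0 from
    sum_mul_fderiv_eq_zero_of_sum_sq_eventuallyEq_const hpd hsq _, mul_zero]
end

section
/- Let L be a light-like line in Lorentz–Minkowski space ℝ^{n+1}_1. For P ∈ ℝ^{n+1}_1 let Λ̄_P := {Q ∈ ℝ^{n+1}_1 : (Q−P)·(Q−P) ≥ 0}, where · is the Lorentzian inner product of signature (+,…,+,−). Then the intersection ⋂_{P ∈ L} Λ̄_P is a light-like hyperplane, namely the unique hyperplane containing L whose defining linear functional is given by Lorentzian pairing with the (light-like) direction vector of L. -/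
/-- The Lorentzian inner product of signature (+,...,+,-) on ℝ^{n+1}. -/
def lor {n : ℕ} (u w : Fin (n + 1) → ℝ) : ℝ :=
  (∑ i : Fin n, u i.castSucc * w i.castSucc) - u (Fin.last n) * w (Fin.last n)

lemma lor_expand {n : ℕ} (w v : Fin (n + 1) → ℝ) (t : ℝ) :
    lor (w - t • v) (w - t • v) = lor w w - 2 * t * lor w v + t ^ 2 * lor v v := by
  simp only [lor, Pi.sub_apply, Pi.smul_apply, smul_eq_mul]
  have h : ∀ i : Fin n, (w i.castSucc - t * v i.castSucc) * (w i.castSucc - t * v i.castSucc)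
      = w i.castSucc * w i.castSucc - 2 * t * (w i.castSucc * v i.castSucc)
        + t ^ 2 * (v i.castSucc * v i.castSucc) := by intro i; ring
  rw [Finset.sum_congr rfl fun i _ => h i]
  simp only [Finset.sum_add_distrib, Finset.sum_sub_distrib, ← Finset.mul_sum]
  ring

lemma lor_smul {n : ℕ} (v : Fin (n + 1) → ℝ) (t : ℝ) :
    lor (t • v) v = t * lor v v := by
  simp only [lor, Pi.smul_apply, smul_eq_mul, mul_assoc, ← Finset.mul_sum]
  ring

lemma lor_nonneg_of_orth {n : ℕ} (v w : Fin (n + 1) → ℝ) (hv : v ≠ 0)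
    (hnull : lor v v = 0) (hwv : lor w v = 0) : 0 ≤ lor w w := by
  simp only [lor] at hnull hwv ⊢
  set A := ∑ i : Fin n, v i.castSucc * v i.castSucc with hA
  have hvv : A = v (Fin.last n) * v (Fin.last n) := by linarith
  by_cases hlast : v (Fin.last n) = 0
  · exfalso
    apply hv
    have hA0 : A = 0 := by rw [hvv, hlast]; ring
    have hAnn : ∀ i ∈ (Finset.univ : Finset (Fin n)),
        (0:ℝ) ≤ v i.castSucc * v i.castSucc := fun i _ => mul_self_nonneg _
    have hzero : ∀ i ∈ (Finset.univ : Finset (Fin n)),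
        v i.castSucc * v i.castSucc = 0 :=
      (Finset.sum_eq_zero_iff_of_nonneg hAnn).mp hA0
    funext i
    refine Fin.lastCases ?_ ?_ i
    · exact hlast
    · intro j
      have := hzero j (Finset.mem_univ j)
      have := mul_self_eq_zero.mp this
      simpa using this
  · have hwl : w (Fin.last n) * v (Fin.last n)
        = ∑ i : Fin n, w i.castSucc * v i.castSucc := by linarith
    have hcs2 : (∑ i : Fin n, w i.castSucc * v i.castSucc) ^ 2
        ≤ (∑ i : Fin n, w i.castSucc * w i.castSucc)
          * (∑ i : Fin n, v i.castSucc * v i.castSucc) := by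
      have := Finset.sum_mul_sq_le_sq_mul_sq (Finset.univ : Finset (Fin n))
        (fun i => w i.castSucc) (fun i => v i.castSucc)
      simpa [mul_pow, pow_two, mul_comm, mul_left_comm, mul_assoc] using this
    rw [← hwl, ← hA, hvv] at hcs2
    have hvl2 : 0 < v (Fin.last n) * v (Fin.last n) :=
      mul_self_pos.mpr hlast
    nlinarith [hcs2, hvl2, sq_nonneg (w (Fin.last n))]

theorem stmt4 {n : ℕ} (v P₀ : Fin (n + 1) → ℝ) (hv : v ≠ 0) (hnull : lor v v = 0) :
    ({Q | ∀ t : ℝ, lor (Q - (P₀ + t • v)) (Q - (P₀ + t • v)) ≥ 0} :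
        Set (Fin (n + 1) → ℝ)) = {Q | lor (Q - P₀) v = 0} ∧
    (∀ t : ℝ, P₀ + t • v ∈ ({Q | lor (Q - P₀) v = 0} : Set (Fin (n + 1) → ℝ))) := by
  have key : ∀ (Q : Fin (n + 1) → ℝ) (t : ℝ),
      lor (Q - (P₀ + t • v)) (Q - (P₀ + t • v))
        = lor (Q - P₀) (Q - P₀) - 2 * t * lor (Q - P₀) v := by
    intro Q t
    have : Q - (P₀ + t • v) = (Q - P₀) - t • v := by ring_nf
    rw [this, lor_expand, hnull]; ring
  constructor
  · ext Q
    simp only [Set.mem_setOf_eq]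
    constructor
    · intro h
      by_contra hne
      set c := lor (Q - P₀) v with hc
      set a := lor (Q - P₀) (Q - P₀) with ha
      have := h ((a + 1) / (2 * c))
      rw [key] at this
      have heq : 2 * ((a + 1) / (2 * c)) * c = a + 1 := by
        field_simp
      rw [← hc, ← ha, heq] at this
      linarith
    · intro h t
      rw [key, h]
      have := lor_nonneg_of_orth v (Q - P₀) hv hnull h
      linarith
  · intro t
    simp only [Set.mem_setOf_eq, add_sub_cancel_left]
    rw [lor_smul, hnull]; ring
end

section
/- Let Ω̄ be the closure of a convex domain in ℝ^n containing an entire straight line l, and let f : Ω̄ → ℝ satisfy |f(x) − f(y)| ≤ |x − y| for all x, y ∈ Ω̄ (every point is space-like or light-like). If the map x ↦ (x, f(x)) sends l to a light-like line L in ℝ^{n+1}_1, then the graph of f lies in a light-like hyperplane of ℝ^{n+1}_1; in particular f is affine on Ω̄. -/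
open RealInnerProductSpace

theorem stmt5 {n : ℕ} (Ω : Set (EuclideanSpace ℝ (Fin n))) (hΩ : IsOpen Ω)
    (hconv : Convex ℝ Ω) (f : EuclideanSpace ℝ (Fin n) → ℝ)
    (x₀ u : EuclideanSpace ℝ (Fin n)) (hu : ‖u‖ = 1)
    (hline : ∀ t : ℝ, x₀ + t • u ∈ closure Ω)
    (hlip : ∀ x ∈ closure Ω, ∀ y ∈ closure Ω, |f x - f y| ≤ ‖x - y‖)
    (hL : ∀ t : ℝ, f (x₀ + t • u) = f x₀ + t) :
    ∀ x ∈ closure Ω, f x = f x₀ + ⟪x - x₀, u⟫ := by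
  intro x hx
  set v := x - x₀ with hv
  set a := (⟪x - x₀, u⟫ : ℝ) with ha
  have key : ∀ t : ℝ, |f x - (f x₀ + t)| ≤ ‖v - t • u‖ := by
    intro t
    have h1 := hlip x hx (x₀ + t • u) (hline t)
    rw [hL t] at h1
    have h2 : x - (x₀ + t • u) = v - t • u := by rw [hv]; abel
    rwa [h2] at h1
  have hcs : |a| ≤ ‖v‖ := by
    calc |a| ≤ ‖v‖ * ‖u‖ := abs_real_inner_le_norm _ _
    _ = ‖v‖ := by rw [hu, mul_one]
  set c := ‖v‖ ^ 2 - a ^ 2 with hc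
  have hc0 : 0 ≤ c := by
    have := sq_abs a
    nlinarith [abs_nonneg a, norm_nonneg v]
  have hnorm : ∀ t : ℝ, ‖v - t • u‖ ^ 2 = (t - a) ^ 2 + c := by
    intro t
    rw [norm_sub_sq_real, real_inner_smul_right, norm_smul, hu]
    simp only [Real.norm_eq_abs, mul_one]
    rw [sq_abs]
    rw [hc, ← ha]
    ring
  have hbound : ∀ s : ℝ, 0 < s → ∀ t : ℝ, (t - a) ^ 2 = s ^ 2 →
      ‖v - t • u‖ ≤ s + c / (2 * s) := by
    intro s hs t ht
    have h1 : ‖v - t • u‖ ^ 2 = s ^ 2 + c := by rw [hnorm, ht]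
    have h2 : 0 ≤ ‖v - t • u‖ := norm_nonneg _
    have h3 : 0 ≤ s + c / (2 * s) := by positivity
    have h4 : (s + c / (2 * s)) ^ 2 = s ^ 2 + c + (c / (2 * s)) ^ 2 := by
      field_simp; ring
    have h5 : ‖v - t • u‖ ^ 2 ≤ (s + c / (2 * s)) ^ 2 := by
      rw [h1, h4]; nlinarith [sq_nonneg (c / (2 * s))]
    exact (pow_le_pow_iff_left₀ h2 h3 two_ne_zero).mp h5
  have main : ∀ ε : ℝ, 0 < ε → |f x - (f x₀ + a)| ≤ ε := by
    intro ε hε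
    set s := (c + 1) / (2 * ε) with hs
    have hs0 : 0 < s := by positivity
    have h2s : ε * (2 * s) = c + 1 := by
      rw [hs]; field_simp
    have hcse : c / (2 * s) ≤ ε := by
      rw [div_le_iff₀ (by positivity)]
      nlinarith
    have hup := key (a - s)
    have hlo := key (a + s)
    have hbu := hbound s hs0 (a - s) (by ring)
    have hbl := hbound s hs0 (a + s) (by ring)
    rw [abs_le] at hup hlo ⊢
    constructor
    · nlinarith [hlo.2]
    · nlinarith [hup.1]
  have : |f x - (f x₀ + a)| ≤ 0 := by
    refine le_of_forall_pos_le_add ?_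
    intro ε hε
    simpa using main ε hε
  have := abs_nonneg (f x - (f x₀ + a))
  have h0 : f x - (f x₀ + a) = 0 := by
    have : |f x - (f x₀ + a)| = 0 := le_antisymm ‹_› ‹_›
    exact abs_eq_zero.mp this
  linarith
end

section
/- Let f : ℝ^n → ℝ be 1-Lipschitz (|f(x)−f(y)| ≤ |x−y| for the Euclidean norm). If f(x+tv) = f(x) + t for some x ∈ ℝ^n, some unit vector v, and all t ∈ ℝ (i.e. the graph contains a light-like line through (x,f(x)) in direction (v,1)), then f(y) = f(x) + ⟨y − x, v⟩ for all y ∈ ℝ^n; that is, f is an affine function whose graph is a light-like hyperplane. -/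
open RealInnerProductSpace

theorem stmt7 {n : ℕ} (f : EuclideanSpace ℝ (Fin n) → ℝ)
    (hlip : ∀ x y, |f x - f y| ≤ ‖x - y‖)
    (x v : EuclideanSpace ℝ (Fin n)) (hv : ‖v‖ = 1)
    (hline : ∀ t : ℝ, f (x + t • v) = f x + t) :
    ∀ y, f y = f x + ⟪y - x, v⟫ := by
  intro y
  set w : EuclideanSpace ℝ (Fin n) := y - x with hw
  set c : ℝ := ⟪w, v⟫ with hc
  have hcs : c ^ 2 ≤ ‖w‖ ^ 2 := by
    have h1 : |⟪w, v⟫| ≤ ‖w‖ * ‖v‖ := abs_real_inner_le_norm w v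
    rw [hv, mul_one] at h1
    nlinarith [sq_abs (⟪w, v⟫), abs_nonneg (⟪w, v⟫), norm_nonneg w]
  set b : ℝ := ‖w‖ ^ 2 - c ^ 2 with hbdef
  have hb : 0 ≤ b := by simp [hbdef]; linarith
  have hnorm : ∀ t : ℝ, ‖x + t • v - y‖ ^ 2 = (t - c) ^ 2 + b := by
    intro t
    have h1 : x + t • v - y = t • v - w := by rw [hw]; abel
    rw [h1, @norm_sub_sq_real]
    have h2 : ⟪t • v, w⟫ = t * c := by
      rw [real_inner_smul_left, hc, real_inner_comm]
    rw [h2, norm_smul, hv, mul_one, Real.norm_eq_abs, sq_abs, hbdef]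
    ring
  -- bound on the norm for t = c ± a
  have hkey : ∀ a : ℝ, 0 < a → ∀ t : ℝ, (t - c) ^ 2 = a ^ 2 →
      ‖x + t • v - y‖ ≤ a + b / (2 * a) := by
    intro a ha t ht
    have hsq : ‖x + t • v - y‖ ^ 2 ≤ (a + b / (2 * a)) ^ 2 := by
      rw [hnorm, ht]
      have : (a + b / (2 * a)) ^ 2 = a ^ 2 + b + (b / (2 * a)) ^ 2 := by
        field_simp; ring
      nlinarith [sq_nonneg (b / (2 * a))]
    have hrhs : 0 ≤ a + b / (2 * a) := by positivity
    nlinarith [norm_nonneg (x + t • v - y)]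
  -- for every ε > 0, |f y - (f x + c)| ≤ ε
  have hmain : ∀ ε : ℝ, 0 < ε → |f y - (f x + c)| ≤ ε := by
    intro ε hε
    set a : ℝ := (b + 1) / (2 * ε) with hadef
    have ha : 0 < a := by positivity
    have hba : b / (2 * a) ≤ ε := by
      rw [div_le_iff₀ (by positivity)]
      have h2a : ε * (2 * a) = b + 1 := by rw [hadef]; field_simp
      linarith
    have hlo : f x + c - ε ≤ f y := by
      have h1 := hlip (x + (c + a) • v) y
      rw [hline (c + a)] at h1
      have h2 : ‖x + (c + a) • v - y‖ ≤ a + b / (2 * a) :=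
        hkey a ha (c + a) (by ring)
      have h3 := abs_le.mp h1
      linarith [h3.1, h3.2]
    have hhi : f y ≤ f x + c + ε := by
      have h1 := hlip (x + (c - a) • v) y
      rw [hline (c - a)] at h1
      have h2 : ‖x + (c - a) • v - y‖ ≤ a + b / (2 * a) :=
        hkey a ha (c - a) (by ring)
      have h3 := abs_le.mp h1
      linarith [h3.1, h3.2]
    rw [abs_le]; constructor <;> linarith
  have : |f y - (f x + c)| ≤ 0 := by
    by_contra h
    push_neg at h
    have := hmain (|f y - (f x + c)| / 2) (by linarith)
    linarith
  have := abs_nonneg (f y - (f x + c))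
  have h0 : |f y - (f x + c)| = 0 := le_antisymm ‹_› ‹_›
  have := abs_eq_zero.mp h0
  linarith
end

section
/- Assume the line theorem: for a C^4 ZMC graph of f on an open set Ω ⊆ ℝ^n, through every degenerate light-like point there passes a relatively open light-like line segment consisting of degenerate light-like points. Let f : ℝ^n → ℝ be C^4 with A_f ≡ 0 and B_f ≥ 0 everywhere, and suppose some point x_0 is light-like. Then the set σ of points on the line through x_0 in the null direction that are degenerate light-like points, being nonempty, relatively open, and closed in that line, equals the whole line; i.e. the graph contains an entire light-like line through (x_0, f(x_0)). -/
open scoped BigOperators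
open RealInnerProductSpace

lemma fderiv_apply_eq_inner_gradient {n : ℕ} (f : EuclideanSpace ℝ (Fin n) → ℝ)
    (x u : EuclideanSpace ℝ (Fin n)) :
    fderiv ℝ f x u = ⟪gradient f x, u⟫ := by
  have : InnerProductSpace.toDual ℝ _ (gradient f x) = fderiv ℝ f x :=
    (InnerProductSpace.toDual ℝ _).apply_symm_apply _
  rw [← this, InnerProductSpace.toDual_apply_apply]

lemma Bf_eq_norm {n : ℕ} (f : EuclideanSpace ℝ (Fin n) → ℝ)
    (x : EuclideanSpace ℝ (Fin n)) :
    Bf f x = 1 - ‖gradient f x‖ ^ 2 := by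
  unfold Bf
  congr 1
  rw [← real_inner_self_eq_norm_sq, PiLp.inner_apply]
  refine Finset.sum_congr rfl fun i _ => ?_
  simp only [pd, fderiv_apply_eq_inner_gradient, RCLike.inner_apply, conj_trivial]
  rw [PiLp.inner_apply]
  simp [EuclideanSpace.single_apply, mul_comm]
  ring

lemma contDiff_Bf {n : ℕ} (f : EuclideanSpace ℝ (Fin n) → ℝ) (hf : ContDiff ℝ 4 f) :
    ContDiff ℝ 3 (Bf f) := by
  have h1 : ContDiff ℝ 3 (fun x => fderiv ℝ f x) := hf.fderiv_right (by norm_num)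
  exact contDiff_const.sub (ContDiff.sum fun i _ =>
    ((h1.clm_apply contDiff_const).pow 2))

theorem stmt10 {n : ℕ} (f : EuclideanSpace ℝ (Fin n) → ℝ) (hf : ContDiff ℝ 4 f)
    (hA : ∀ x, Af f x = 0) (hB : ∀ x, Bf f x ≥ 0)
    (lineThm : ∀ x, Bf f x = 0 → gradient (Bf f) x = 0 →
      ∃ ε > 0, ∀ t : ℝ, |t| < ε →
        Bf f (x + t • gradient f x) = 0 ∧
        gradient (Bf f) (x + t • gradient f x) = 0 ∧
        f (x + t • gradient f x) = f x + t)
    (x₀ : EuclideanSpace ℝ (Fin n)) (hx₀ : Bf f x₀ = 0) :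
    ∀ t : ℝ,
      Bf f (x₀ + t • gradient f x₀) = 0 ∧
      gradient (Bf f) (x₀ + t • gradient f x₀) = 0 ∧
      f (x₀ + t • gradient f x₀) = f x₀ + t := by
  set v := gradient f x₀ with hv
  have hBcd : ContDiff ℝ 3 (Bf f) := contDiff_Bf f hf
  -- gradient of Bf vanishes wherever Bf = 0
  have hgradB : ∀ x, Bf f x = 0 → gradient (Bf f) x = 0 := by
    intro x hx
    have hmin : IsLocalMin (Bf f) x := by
      refine Filter.Eventually.of_forall fun y => ?_
      rw [hx]; exact hB y
    have := hmin.fderiv_eq_zero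
    unfold gradient
    rw [this, map_zero]
  -- norms of gradient are 1 where Bf = 0
  have hnorm : ∀ x, Bf f x = 0 → ‖gradient f x‖ = 1 := by
    intro x hx
    rw [Bf_eq_norm] at hx
    have : ‖gradient f x‖ ^ 2 = 1 := by linarith
    nlinarith [norm_nonneg (gradient f x)]
  have hnv : ‖v‖ = 1 := hnorm x₀ hx₀
  -- continuity facts
  have hBcont : Continuous (Bf f) := hBcd.continuous
  have hgradBcont : Continuous (gradient (Bf f)) := by
    have : Continuous (fun x => fderiv ℝ (Bf f) x) :=
      (hBcd.fderiv_right (m := 2) (by norm_num)).continuous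
    exact (InnerProductSpace.toDual ℝ _).symm.continuous.comp this
  have hgradfcont : Continuous (gradient f) := by
    have : Continuous (fun x => fderiv ℝ f x) :=
      (hf.fderiv_right (m := 3) (by norm_num)).continuous
    exact (InnerProductSpace.toDual ℝ _).symm.continuous.comp this
  have hfcont : Continuous f := hf.continuous
  have hfdiff : Differentiable ℝ f := hf.differentiable (by norm_num)
  -- the set
  set S : Set ℝ := {t | Bf f (x₀ + t • v) = 0 ∧ f (x₀ + t • v) = f x₀ + t ∧
      gradient f (x₀ + t • v) = v} with hS
  have hline : Continuous (fun t : ℝ => x₀ + t • v) := by continuity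
  have hSclosed : IsClosed S := by
    have h1 : IsClosed {t : ℝ | Bf f (x₀ + t • v) = 0} :=
      isClosed_eq (hBcont.comp hline) continuous_const
    have h2 : IsClosed {t : ℝ | f (x₀ + t • v) = f x₀ + t} :=
      isClosed_eq (hfcont.comp hline) (by continuity)
    have h3 : IsClosed {t : ℝ | gradient f (x₀ + t • v) = v} :=
      isClosed_eq (hgradfcont.comp hline) continuous_const
    exact (h1.inter (h2.inter h3))
  have hSopen : IsOpen S := by
    rw [isOpen_iff_mem_nhds]
    rintro t ⟨h1, h2, h3⟩
    set x := x₀ + t • v with hx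
    obtain ⟨ε, hε, hseg⟩ := lineThm x h1 (hgradB x h1)
    have hxs : ∀ s : ℝ, x + s • gradient f x = x₀ + (t + s) • v := by
      intro s; rw [h3, hx, add_smul]; abel
    have key : ∀ s : ℝ, |s| < ε → (t + s) ∈ S := by
      intro s hs
      obtain ⟨hb, hgb, hfv⟩ := hseg s hs
      rw [hxs s] at hb hfv
      refine ⟨hb, ?_, ?_⟩
      · rw [hfv, h2]; ring
      · -- gradient f at y equals v
        set y := x₀ + (t + s) • v with hy
        -- derivative of u ↦ f (x + u • v) at s is ⟪gradient f y, v⟫, and equals 1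
        have hd1 : HasDerivAt (fun u : ℝ => x + u • v) v s := by
          simpa using (((hasDerivAt_id s).smul_const v).const_add x)
        have hy' : x + s • v = y := by rw [hy, hx, add_smul]; abel
        have hd2 : HasDerivAt (fun u : ℝ => f (x + u • v)) (fderiv ℝ f y v) s := by
          have h := (hfdiff (x + s • v)).hasFDerivAt.comp_hasDerivAt s hd1
          rwa [hy'] at h
        have heq : (fun u : ℝ => f (x + u • v)) =ᶠ[nhds s] (fun u : ℝ => f x + u) := by
          have hopen : IsOpen {u : ℝ | |u| < ε} := by
            have : {u : ℝ | |u| < ε} = Metric.ball (0:ℝ) ε := by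
              ext u; simp [Real.dist_eq]
            rw [this]; exact Metric.isOpen_ball
          filter_upwards [hopen.mem_nhds hs] with u hu
          have := (hseg u hu).2.2
          rw [← h3]; exact this
        have hd3 : HasDerivAt (fun u : ℝ => f (x + u • v)) 1 s := by
          refine HasDerivAt.congr_of_eventuallyEq ?_ heq
          simpa using ((hasDerivAt_id s).const_add (f x))
        have hder : fderiv ℝ f y v = 1 := by
          have := hd2.unique hd3; exact this
        have hinner : ⟪gradient f y, v⟫ = 1 := by
          rw [← fderiv_apply_eq_inner_gradient]; exact hder
        have hny : ‖gradient f y‖ = 1 := hnorm y hb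
        have : ‖gradient f y - v‖ ^ 2 = 0 := by
          rw [norm_sub_sq_real, hny, hnv, hinner]; ring
        have := pow_eq_zero_iff (n := 2) (by norm_num) |>.mp this
        have := norm_eq_zero.mp this
        exact sub_eq_zero.mp this
    have : Set.Ioo (t - ε) (t + ε) ⊆ S := by
      intro u hu
      have : u = t + (u - t) := by ring
      rw [this]
      apply key
      rw [abs_lt]; constructor <;> [linarith [hu.1]; linarith [hu.2]]
    exact Filter.mem_of_superset (Ioo_mem_nhds (by linarith) (by linarith)) this
  have h0S : (0 : ℝ) ∈ S := by
    refine ⟨by simpa using hx₀, by simp, by simp [hv]⟩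
  have hSuniv : S = Set.univ :=
    IsClopen.eq_univ ⟨hSclosed, hSopen⟩ ⟨0, h0S⟩
  intro t
  have htS : t ∈ S := hSuniv ▸ Set.mem_univ t
  obtain ⟨h1, h2, _⟩ := htS
  exact ⟨h1, hgradB _ h1, h2⟩
end

section
/- (Bernstein-type theorem without time-like points, assuming the Calabi–Cheng–Yau theorem and the line theorem) Let f : ℝ^n → ℝ be C^4 with A_f ≡ 0 (entire ZMC graph) and B_f ≥ 0 everywhere (no time-like points). Then the graph of f is a hyperplane in ℝ^{n+1}_1; i.e. f is an affine function. -/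
open scoped BigOperators
open RealInnerProductSpace

/-! If `B_f > 0` everywhere, Calabi–Cheng–Yau applies. Otherwise take a light-like point
`x₀`; then `v = ∇f(x₀)` is a unit vector and `|∇f| ≤ 1` makes `f` 1-Lipschitz. Along the line
`x₀ + ℝ v` the set where the slope of `f` in direction `v` equals `1` is closed, and it is open
by the line theorem: slope `1` forces `∇f = v`, so the point is light-like, hence a minimum of
`B_f` and degenerate. Thus `f(x₀ + t v) = f(x₀) + t` for all `t`, and a 1-Lipschitz function
growing with unit speed along a whole line is affine. -/

open Filter Topology

section InnerProductSpace

variable {E : Type*} [NormedAddCommGroup E] [InnerProductSpace ℝ E]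

theorem eq_of_norm_le_one_of_inner_eq_one {u v : E} (hu : ‖u‖ ≤ 1) (hv : ‖v‖ = 1)
    (h : ⟪u, v⟫ = 1) : u = v := by
  have hu' : ‖u‖ = 1 := le_antisymm hu (by simpa [h, hv] using real_inner_le_norm u v)
  exact (inner_eq_one_iff_of_norm_eq_one hu' hv).1 h

theorem hasDerivAt_apply_add_smul [CompleteSpace E] {f : E → ℝ} {x v : E} {t : ℝ}
    (hf : DifferentiableAt ℝ f (x + t • v)) :
    HasDerivAt (fun s : ℝ => f (x + s • v)) ⟪gradient f (x + t • v), v⟫ t := by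
  have hline : HasDerivAt (fun s : ℝ => x + s • v) v t := by
    simpa using ((hasDerivAt_id t).smul_const v).const_add x
  rw [inner_gradient_left]
  exact hf.hasFDerivAt.comp_hasDerivAt t hline

theorem LipschitzWith.apply_sub_eq_inner_of_apply_add_smul {f : E → ℝ} (hf : LipschitzWith 1 f)
    {x₀ v : E} (hv : ‖v‖ = 1) (hline : ∀ t : ℝ, f (x₀ + t • v) = f x₀ + t) (y : E) :
    f y - f x₀ = ⟪v, y - x₀⟫ := by
  set w := y - x₀
  set d := f y - f x₀
  set c := ⟪v, w⟫
  -- comparing `f y` with `f (x₀ + t • v)`, the `t²` terms cancel, leaving a bound linear in `t`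
  have key : ∀ t : ℝ, 2 * t * (c - d) ≤ ‖w‖ ^ 2 - d ^ 2 := by
    intro t
    have hdist : |d - t| ≤ ‖w - t • v‖ := by
      have := hf.dist_le_mul y (x₀ + t • v)
      rwa [Real.dist_eq, dist_eq_norm, hline, NNReal.coe_one, one_mul, ← sub_sub,
        ← sub_sub] at this
    have hnorm : ‖w - t • v‖ ^ 2 = ‖w‖ ^ 2 - 2 * t * c + t ^ 2 := by
      rw [norm_sub_sq_real, real_inner_smul_right, norm_smul, mul_pow, Real.norm_eq_abs, sq_abs,
        hv, real_inner_comm]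
      ring
    nlinarith [sq_abs (d - t), pow_le_pow_left₀ (abs_nonneg _) hdist 2]
  by_contra hne
  have hcd : c - d ≠ 0 := sub_ne_zero.2 (Ne.symm hne)
  have := key ((‖w‖ ^ 2 - d ^ 2 + 1) / (2 * (c - d)))
  rw [show 2 * ((‖w‖ ^ 2 - d ^ 2 + 1) / (2 * (c - d))) * (c - d) = ‖w‖ ^ 2 - d ^ 2 + 1 by
    field_simp] at this
  linarith

end InnerProductSpace

theorem eq_add_sub_of_deriv_eq_one {g : ℝ → ℝ} (hg : ContDiff ℝ 1 g) {t₀ : ℝ}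
    (h₀ : deriv g t₀ = 1) (hloc : ∀ t, deriv g t = 1 → ∀ᶠ s in 𝓝 t, g s = g t + (s - t))
    (s : ℝ) : g s = g t₀ + (s - t₀) := by
  have hopen : IsOpen {t | deriv g t = 1} := isOpen_iff_mem_nhds.2 fun t ht => by
    filter_upwards [eventually_eventually_nhds.2 (hloc t ht)] with r hr
    have haffine : HasDerivAt (fun s => g t + (s - t)) 1 r := by
      simpa using ((hasDerivAt_id r).sub_const t).const_add (g t)
    exact (haffine.congr_of_eventuallyEq hr).deriv
  have hclosed : IsClosed {t | deriv g t = 1} :=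
    isClosed_eq (hg.continuous_deriv le_rfl) continuous_const
  have hall : ∀ t, deriv g t = 1 :=
    Set.eq_univ_iff_forall.1 (IsClopen.eq_univ ⟨hclosed, hopen⟩ ⟨t₀, h₀⟩)
  have hdiff : Differentiable ℝ g := hg.differentiable one_ne_zero
  have := is_const_of_deriv_eq_zero (f := fun r => g r - r) (hdiff.sub differentiable_id)
    (fun t => by simp [hdiff t, hall t]) s t₀
  linarith

section Bf

variable {n : ℕ} (f : EuclideanSpace ℝ (Fin n) → ℝ)

theorem pd_eq_gradient_apply (i : Fin n) (x : EuclideanSpace ℝ (Fin n)) :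
    pd f i x = gradient f x i := by
  rw [pd, ← inner_gradient_left, EuclideanSpace.inner_single_right]
  simp

theorem Bf_eq_one_sub_norm_sq (x : EuclideanSpace ℝ (Fin n)) :
    Bf f x = 1 - ‖gradient f x‖ ^ 2 := by
  simp [Bf, pd_eq_gradient_apply, EuclideanSpace.norm_sq_eq]

theorem norm_gradient_le_one_of_Bf_nonneg {x : EuclideanSpace ℝ (Fin n)} (hx : 0 ≤ Bf f x) :
    ‖gradient f x‖ ≤ 1 := by
  rw [Bf_eq_one_sub_norm_sq] at hx
  exact (sq_le_one_iff₀ (norm_nonneg _)).1 (by linarith)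

theorem Bf_eq_zero_iff_norm_gradient_eq_one (x : EuclideanSpace ℝ (Fin n)) :
    Bf f x = 0 ↔ ‖gradient f x‖ = 1 := by
  rw [Bf_eq_one_sub_norm_sq, sub_eq_zero, eq_comm,
    pow_eq_one_iff_of_nonneg (norm_nonneg _) two_ne_zero]

theorem lipschitzWith_one_of_Bf_nonneg (hf : Differentiable ℝ f) (hB : ∀ x, 0 ≤ Bf f x) :
    LipschitzWith 1 f := by
  refine lipschitzWith_of_nnnorm_fderiv_le hf fun x => ?_
  rw [← NNReal.coe_le_coe, coe_nnnorm, NNReal.coe_one]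
  have : ‖gradient f x‖ = ‖fderiv ℝ f x‖ := LinearIsometryEquiv.norm_map _ _
  exact this ▸ norm_gradient_le_one_of_Bf_nonneg f (hB x)

theorem gradient_Bf_eq_zero_of_Bf_eq_zero (hB : ∀ x, 0 ≤ Bf f x)
    {x : EuclideanSpace ℝ (Fin n)} (hx : Bf f x = 0) : gradient (Bf f) x = 0 := by
  have hmin : IsLocalMin (Bf f) x := Eventually.of_forall fun y => hx ▸ hB y
  rw [gradient, hmin.fderiv_eq_zero, map_zero]

theorem eventually_apply_add_smul_eq (hB : ∀ x, 0 ≤ Bf f x)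
    (hline : ∀ x, Bf f x = 0 → gradient (Bf f) x = 0 →
      ∃ ε > 0, ∀ t : ℝ, |t| < ε → f (x + t • gradient f x) = f x + t)
    {x₀ v : EuclideanSpace ℝ (Fin n)} (hv : ‖v‖ = 1) {t : ℝ}
    (ht : ⟪gradient f (x₀ + t • v), v⟫ = 1) :
    ∀ᶠ s in 𝓝 t, f (x₀ + s • v) = f (x₀ + t • v) + (s - t) := by
  set y := x₀ + t • v
  have hgrad : gradient f y = v :=
    eq_of_norm_le_one_of_inner_eq_one (norm_gradient_le_one_of_Bf_nonneg f (hB y)) hv ht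
  have hy : Bf f y = 0 := (Bf_eq_zero_iff_norm_gradient_eq_one f y).2 (hgrad ▸ hv)
  obtain ⟨ε, hε, hε'⟩ := hline y hy (gradient_Bf_eq_zero_of_Bf_eq_zero f hB hy)
  filter_upwards [Metric.ball_mem_nhds t hε] with s hs
  rw [Metric.mem_ball, Real.dist_eq] at hs
  have := hε' (s - t) hs
  rwa [hgrad, show y + (s - t) • v = x₀ + s • v by simp only [y, sub_smul]; abel] at this

theorem apply_add_smul_gradient_eq_of_Bf_eq_zero (hf : ContDiff ℝ 1 f)
    (hB : ∀ x, 0 ≤ Bf f x)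
    (hline : ∀ x, Bf f x = 0 → gradient (Bf f) x = 0 →
      ∃ ε > 0, ∀ t : ℝ, |t| < ε → f (x + t • gradient f x) = f x + t)
    {x₀ : EuclideanSpace ℝ (Fin n)} (hx₀ : Bf f x₀ = 0) (s : ℝ) :
    f (x₀ + s • gradient f x₀) = f x₀ + s := by
  set v := gradient f x₀
  have hv : ‖v‖ = 1 := (Bf_eq_zero_iff_norm_gradient_eq_one f x₀).1 hx₀
  have hderiv (t : ℝ) : deriv (fun s : ℝ => f (x₀ + s • v)) t = ⟪gradient f (x₀ + t • v), v⟫ :=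
    (hasDerivAt_apply_add_smul (hf.differentiable one_ne_zero _)).deriv
  simpa using eq_add_sub_of_deriv_eq_one (g := fun s => f (x₀ + s • v))
    (hf.comp (by fun_prop)) (t₀ := 0) (by simp [hderiv, v, hv])
    (fun t ht => eventually_apply_add_smul_eq f hB hline hv (hderiv t ▸ ht)) s

end Bf

theorem stmt11 {n : ℕ} (f : EuclideanSpace ℝ (Fin n) → ℝ) (hf : ContDiff ℝ 4 f)
    (hA : ∀ x, Af f x = 0) (hB : ∀ x, Bf f x ≥ 0)
    (CCY : ∀ g : EuclideanSpace ℝ (Fin n) → ℝ, ContDiff ℝ 4 g →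
      (∀ x, Af g x = 0) → (∀ x, Bf g x > 0) →
      ∃ (a : EuclideanSpace ℝ (Fin n)) (b : ℝ), ∀ x, g x = ⟪a, x⟫ + b)
    (lineThm : ∀ g : EuclideanSpace ℝ (Fin n) → ℝ, ContDiff ℝ 4 g →
      (∀ x, Af g x = 0) →
      ∀ x, Bf g x = 0 → gradient (Bf g) x = 0 →
        ∃ ε > 0, ∀ t : ℝ, |t| < ε →
          Bf g (x + t • gradient g x) = 0 ∧
          gradient (Bf g) (x + t • gradient g x) = 0 ∧
          g (x + t • gradient g x) = g x + t) :
    ∃ (a : EuclideanSpace ℝ (Fin n)) (b : ℝ), ∀ x, f x = ⟪a, x⟫ + b := by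
  by_cases hpos : ∀ x, Bf f x > 0
  · exact CCY f hf hA hpos
  push Not at hpos
  obtain ⟨x₀, hx₀⟩ := hpos
  have hx₀' : Bf f x₀ = 0 := le_antisymm hx₀ (hB x₀)
  have hline := apply_add_smul_gradient_eq_of_Bf_eq_zero f (hf.of_le (by norm_num)) hB
    (fun x hx hgx => (lineThm f hf hA x hx hgx).imp fun _ ⟨hε, h⟩ =>
      ⟨hε, fun t ht => (h t ht).2.2⟩) hx₀'
  have hv : ‖gradient f x₀‖ = 1 := (Bf_eq_zero_iff_norm_gradient_eq_one f x₀).1 hx₀'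
  have haffine := (lipschitzWith_one_of_Bf_nonneg f (hf.differentiable (by norm_num)) hB)
    |>.apply_sub_eq_inner_of_apply_add_smul hv hline
  exact ⟨gradient f x₀, f x₀ - ⟪gradient f x₀, x₀⟫, fun y => by
    linarith [haffine y, inner_sub_right (𝕜 := ℝ) (gradient f x₀) y x₀]⟩
end

section
/- (Corollary B, Lipschitz version) Let f : ℝ^n → ℝ be a C^1 function with |∇f(x)| = 1 for all x (entire light-like graph). Assume the light-like line theorem: through every point of a C^1 light-like graph passes a light-like line segment in the graph. Then f(x) = ⟨x, v⟩ + c for some unit vector v ∈ ℝ^n and constant c; i.e. the graph is a light-like hyperplane. -/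
/-!
By the light-like line theorem every point `y` lies on a segment along which `f` grows with unit
slope in a unit direction `v`; differentiating along it gives `⟪∇f y, v⟫ = 1`, so `v = ∇f y`.
Continuity of `∇f` lets the segment through `x` in direction `∇f x` be continued (a clopen
argument) to the whole line. Since `|∇f| = 1`, `f` is `1`-Lipschitz, and two full unit-slope lines
`x + t a`, `y + t b` of a `1`-Lipschitz function are parallel: going from `y - t b` to `x + t a`
gains `2t` in height over a distance `≤ ‖x - y‖ + t ‖a + b‖`, forcing `‖a + b‖ = 2`. Hence `∇f` is
constant.
-/

open RealInnerProductSpace Filter Topology Set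

theorem Filter.Eventually.unit_slope_shift {E : Type*} [AddCommGroup E] [Module ℝ E] {f : E → ℝ}
    {y v : E} (h : ∀ᶠ r in 𝓝 (0 : ℝ), f (y + r • v) = f y + r) :
    ∀ᶠ r in 𝓝 (0 : ℝ), ∀ᶠ s in 𝓝 (0 : ℝ), f ((y + r • v) + s • v) = f (y + r • v) + s := by
  filter_upwards [h, h.eventually_nhds] with r hr hr'
  rw [← map_add_left_nhds_zero r, eventually_map] at hr'
  filter_upwards [hr'] with s hs
  rw [add_assoc, ← add_smul, hs, hr, add_assoc]

section

variable {E : Type*} [NormedAddCommGroup E] [InnerProductSpace ℝ E] {f : E → ℝ}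

theorem eq_of_norm_eq_one_of_two_le_norm_add {a b : E} (ha : ‖a‖ = 1) (hb : ‖b‖ = 1)
    (h : 2 ≤ ‖a + b‖) : a = b := by
  have hsum : ‖a + b‖ = ‖a‖ + ‖b‖ := le_antisymm (norm_add_le a b) (by linarith)
  simpa [ha, hb] using norm_add_eq_iff_real.1 hsum

theorem eq_of_lipschitzWith_one_of_unit_slope_lines (hf : LipschitzWith 1 f) {x y a b : E}
    (ha : ‖a‖ = 1) (hb : ‖b‖ = 1) (hxa : ∀ t : ℝ, f (x + t • a) = f x + t)
    (hyb : ∀ t : ℝ, f (y + t • b) = f y + t) : a = b := by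
  set D := ‖x - y‖ - (f x - f y)
  have key : ∀ t : ℝ, 0 ≤ t → 2 * t ≤ D + t * ‖a + b‖ := fun t ht =>
    calc 2 * t = f (x + t • a) - f (y + (-t) • b) - (f x - f y) := by rw [hxa, hyb]; ring
      _ ≤ ‖(x + t • a) - (y + (-t) • b)‖ - (f x - f y) := by
        gcongr
        simpa [Real.dist_eq, dist_eq_norm] using (le_abs_self _).trans (hf.dist_le_mul _ _)
      _ = ‖(x - y) + t • (a + b)‖ - (f x - f y) := by congr 2; module
      _ ≤ ‖x - y‖ + ‖t • (a + b)‖ - (f x - f y) := by gcongr; exact norm_add_le _ _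
      _ = D + t * ‖a + b‖ := by rw [norm_smul, Real.norm_of_nonneg ht]; ring
  refine eq_of_norm_eq_one_of_two_le_norm_add ha hb (not_lt.1 fun hlt => ?_)
  have hpos : 0 < 2 - ‖a + b‖ := by linarith
  have := key ((|D| + 1) / (2 - ‖a + b‖)) (by positivity)
  have hmul : (|D| + 1) / (2 - ‖a + b‖) * (2 - ‖a + b‖) = |D| + 1 := div_mul_cancel₀ _ hpos.ne'
  nlinarith [le_abs_self D]

variable [CompleteSpace E]

theorem lipschitzWith_one_of_norm_gradient_le (hf : Differentiable ℝ f)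
    (h : ∀ x, ‖gradient f x‖ ≤ 1) : LipschitzWith 1 f :=
  lipschitzWith_of_nnnorm_fderiv_le hf fun x => by
    rw [← NNReal.coe_le_coe, coe_nnnorm, ← toDual_gradient, LinearIsometryEquiv.norm_map]
    exact h x

theorem gradient_eq_of_eventually_unit_slope {y v : E} (hf : DifferentiableAt ℝ f y)
    (hgrad : ‖gradient f y‖ = 1) (hv : ‖v‖ = 1)
    (h : ∀ᶠ r in 𝓝 (0 : ℝ), f (y + r • v) = f y + r) : gradient f y = v := by
  have hline : HasDerivAt (fun r : ℝ => y + r • v) v 0 := by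
    simpa using ((hasDerivAt_id (0 : ℝ)).smul_const v).const_add y
  have hcomp : HasDerivAt (fun r : ℝ => f (y + r • v)) (fderiv ℝ f y v) 0 := by
    have hfy : HasFDerivAt f (fderiv ℝ f y) (y + (0 : ℝ) • v) := by simpa using hf.hasFDerivAt
    exact hfy.comp_hasDerivAt 0 hline
  have hunit : HasDerivAt (fun r : ℝ => f (y + r • v)) 1 0 :=
    ((hasDerivAt_id (0 : ℝ)).const_add (f y)).congr_of_eventuallyEq h
  rw [← inner_eq_one_iff_of_norm_eq_one (𝕜 := ℝ) hgrad hv, inner_gradient_left]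
  exact hcomp.unique hunit

theorem unit_slope_along_gradient (hf : ContDiff ℝ 1 f) (hgrad : ∀ x, ‖gradient f x‖ = 1)
    (hseg : ∀ y, ∃ v, ‖v‖ = 1 ∧ ∀ᶠ r in 𝓝 (0 : ℝ), f (y + r • v) = f y + r) (x : E) (t : ℝ) :
    f (x + t • gradient f x) = f x + t := by
  have hdiff : Differentiable ℝ f := hf.differentiable one_ne_zero
  have hcont : Continuous (gradient f) :=
    (InnerProductSpace.toDual ℝ E).symm.continuous.comp (hf.continuous_fderiv one_ne_zero)
  set g := gradient f x
  let S : Set ℝ := {t | f (x + t • g) = f x + t ∧ gradient f (x + t • g) = g}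
  have hclosed : IsClosed S :=
    (isClosed_eq (by fun_prop) (by fun_prop)).inter (isClosed_eq (by fun_prop) continuous_const)
  have hopen : IsOpen S := by
    refine isOpen_iff_mem_nhds.2 fun t₀ ⟨hft₀, hgt₀⟩ => ?_
    obtain ⟨v, hv, hv_seg⟩ := hseg (x + t₀ • g)
    have hvg : v = g :=
      (gradient_eq_of_eventually_unit_slope (hdiff _) (hgrad _) hv hv_seg).symm.trans hgt₀
    subst hvg
    rw [← map_add_left_nhds_zero t₀, mem_map]
    filter_upwards [hv_seg, hv_seg.unit_slope_shift] with r hr hr'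
    have hpt : x + (t₀ + r) • g = (x + t₀ • g) + r • g := by rw [add_smul, add_assoc]
    refine ⟨by rw [hpt, hr, hft₀, add_assoc], ?_⟩
    rw [hpt]
    exact gradient_eq_of_eventually_unit_slope (hdiff _) (hgrad _) hv hr'
  have hS : S = univ := IsClopen.eq_univ ⟨hclosed, hopen⟩ ⟨0, by simp [S, g]⟩
  exact (hS ▸ mem_univ t : t ∈ S).1

theorem eq_inner_add_of_gradient_eq (hf : Differentiable ℝ f) {v : E}
    (h : ∀ x, gradient f x = v) (x : E) : f x = ⟪x, v⟫ + f 0 := by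
  set ℓ := InnerProductSpace.toDual ℝ E v
  have hderiv : ∀ z, HasFDerivAt (fun x => f x - ℓ x) 0 z := fun z => by
    have hfz : HasFDerivAt f ℓ z := hasGradientAt_iff_hasFDerivAt.1 (h z ▸ (hf z).hasGradientAt)
    exact (hfz.sub ℓ.hasFDerivAt).congr_fderiv (sub_self ℓ)
  have := is_const_of_fderiv_eq_zero (fun z => (hderiv z).differentiableAt)
    (fun z => (hderiv z).fderiv) x 0
  simp only [ℓ, InnerProductSpace.toDual_apply_apply, inner_zero_right, sub_zero] at this
  rw [real_inner_comm]
  linarith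


end

theorem stmt12 {n : ℕ} (f : EuclideanSpace ℝ (Fin n) → ℝ) (hf : ContDiff ℝ 1 f)
    (hlight : ∀ x, ‖gradient f x‖ = 1)
    (lineThm : ∀ x : EuclideanSpace ℝ (Fin n),
      ∃ v : EuclideanSpace ℝ (Fin n), ‖v‖ = 1 ∧
        ∃ ε > 0, ∀ t : ℝ, |t| < ε → f (x + t • v) = f x + t) :
    ∃ (v : EuclideanSpace ℝ (Fin n)) (c : ℝ), ‖v‖ = 1 ∧ ∀ x, f x = ⟪x, v⟫ + c := by
  have hdiff : Differentiable ℝ f := hf.differentiable one_ne_zero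
  have hlip : LipschitzWith 1 f :=
    lipschitzWith_one_of_norm_gradient_le hdiff fun x => (hlight x).le
  have hseg : ∀ y, ∃ v, ‖v‖ = 1 ∧ ∀ᶠ r in 𝓝 (0 : ℝ), f (y + r • v) = f y + r := fun y => by
    obtain ⟨v, hv, ε, hε, h⟩ := lineThm y
    exact ⟨v, hv, Metric.eventually_nhds_iff.2 ⟨ε, hε, fun r hr => h r (by simpa using hr)⟩⟩
  have hline := unit_slope_along_gradient hf hlight hseg
  have hconst : ∀ x, gradient f x = gradient f 0 := fun x =>
    eq_of_lipschitzWith_one_of_unit_slope_lines hlip (hlight x) (hlight 0) (hline x) (hline 0)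
  exact ⟨gradient f 0, f 0, hlight 0, eq_inner_add_of_gradient_eq hdiff hconst⟩
end
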